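/- arXiv:2502.14166 — 2 statements merged into one kernel-verified Lean document; each statement's English description precedes it below -/
import Mathlib

section
/- Let (X_i, Y_i), i = 1,...,n, be iid pairs and X̃_i, i = 1,...,N, be iid copies of X_1 independent of the labeled sample, with σ² = Var(Y_1) < ∞, τ² = Var(f(X_1)) < ∞ and γ = Cov(f(X_1), Y_1), where τ² > 0. For λ ∈ ℝ define θ̂_λ = Ȳ + λ(Z̃^f − Z̄^f), where Ȳ = (1/n)Σ Y_i, Z̄^f = (1/n)Σ f(X_i), Z̃^f = (1/N)Σ f(X̃_i). Then Var(θ̂_λ) = σ²/n + ((n+N)/(nN))λ²τ² − (2/n)λγ; this variance is uniquely minimized over λ ∈ ℝ at λ* = (N/(n+N))·(γ/τ²), and the minimum value equals σ²/n − (N/(n(n+N)))·(γ²/τ²). -/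
/-!
Writing `θ̂_λ = n⁻¹ ∑ (Y_i - λ f(X_i)) + λ N⁻¹ ∑ f(X̃_i)`, the two averages are independent means of
iid terms, so `Var θ̂_λ = Var(Y - λ f(X)) / n + λ² τ² / N`, a quadratic in `λ` with leading
coefficient `(n + N) τ² / (n N) > 0`; completing the square gives the minimizer and the minimum.
-/

open MeasureTheory ProbabilityTheory

section IIDMean

variable {Ω α ι : Type*} [MeasurableSpace Ω] [MeasurableSpace α] [Fintype ι] {μ : Measure Ω}
  {V : ι → Ω → α} {V₀ : Ω → α} {g : α → ℝ}

lemma memLp_const_mul_sum_comp_of_identDistrib (hg : Measurable g)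
    (hident : ∀ i, IdentDistrib (V i) V₀ μ μ) (hg2 : MemLp (fun ω => g (V₀ ω)) 2 μ) (c : ℝ) :
    MemLp (fun ω => c * ∑ i, g (V i ω)) 2 μ := by
  have hterm i : MemLp (fun ω => g (V i ω)) 2 μ := ((hident i).comp hg).symm.memLp_snd hg2
  simpa using (memLp_finsetSum' Finset.univ fun i _ => hterm i).const_mul c

lemma variance_mean_comp_of_iIndepFun (hg : Measurable g) (hV : iIndepFun V μ)
    (hident : ∀ i, IdentDistrib (V i) V₀ μ μ) (hg2 : MemLp (fun ω => g (V₀ ω)) 2 μ) :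
    Var[fun ω => (Fintype.card ι : ℝ)⁻¹ * ∑ i, g (V i ω); μ]
      = Var[fun ω => g (V₀ ω); μ] / Fintype.card ι := by
  have hterm i : MemLp (fun ω => g (V i ω)) 2 μ := ((hident i).comp hg).symm.memLp_snd hg2
  have hvar_term i : Var[fun ω => g (V i ω); μ] = Var[fun ω => g (V₀ ω); μ] :=
    ((hident i).comp hg).variance_eq
  have hsum : Var[fun ω => ∑ i, g (V i ω); μ] = Fintype.card ι * Var[fun ω => g (V₀ ω); μ] := by
    rw [← Finset.sum_fn, IndepFun.variance_sum (fun i _ => hterm i)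
      fun i _ j _ hij => (hV.indepFun hij).comp hg hg]
    simp [hvar_term]
  rw [variance_const_mul, hsum]
  rcases eq_or_ne (Fintype.card ι : ℝ) 0 with h | h
  · simp [h]
  · field_simp

end IIDMean

lemma variance_sub_const_mul {Ω : Type*} [MeasurableSpace Ω] {μ : Measure Ω} [IsFiniteMeasure μ]
    {Y Z : Ω → ℝ} (hY : MemLp Y 2 μ) (hZ : MemLp Z 2 μ) (c : ℝ) :
    Var[fun ω => Y ω - c * Z ω; μ] = Var[Y; μ] + c ^ 2 * Var[Z; μ] - 2 * c * cov[Z, Y; μ] := by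
  rw [variance_fun_sub hY (hZ.const_mul c), covariance_const_mul_right, covariance_comm,
    variance_const_mul]
  ring

lemma quadratic_lt_of_ne_vertex {a b c x : ℝ} (ha : 0 < a) (hx : x ≠ b / a) :
    c + a * (b / a) ^ 2 - 2 * b * (b / a) < c + a * x ^ 2 - 2 * b * x := by
  have hsq : c + a * x ^ 2 - 2 * b * x - (c + a * (b / a) ^ 2 - 2 * b * (b / a))
      = a * (x - b / a) ^ 2 := by
    field_simp
    ring
  have : 0 < a * (x - b / a) ^ 2 := mul_pos ha (by positivity)
  linarith

section PowerTunedPPI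

variable {Ω 𝒳 : Type*} {n N : ℕ}

noncomputable def powerTunedPPI (X : Fin n → Ω → 𝒳) (Y : Fin n → Ω → ℝ) (Xt : Fin N → Ω → 𝒳)
    (f : 𝒳 → ℝ) (lam : ℝ) : Ω → ℝ :=
  fun ω => (n : ℝ)⁻¹ * ∑ i, Y i ω
    + lam * ((N : ℝ)⁻¹ * ∑ i, f (Xt i ω) - (n : ℝ)⁻¹ * ∑ i, f (X i ω))

lemma powerTunedPPI_eq (X : Fin n → Ω → 𝒳) (Y : Fin n → Ω → ℝ) (Xt : Fin N → Ω → 𝒳)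
    (f : 𝒳 → ℝ) (lam : ℝ) :
    powerTunedPPI X Y Xt f lam = fun ω => (n : ℝ)⁻¹ * ∑ i, (Y i ω - lam * f (X i ω))
      + lam * ((N : ℝ)⁻¹ * ∑ i, f (Xt i ω)) := by
  funext ω
  simp only [powerTunedPPI, Finset.sum_sub_distrib, ← Finset.mul_sum]
  ring

lemma variance_powerTunedPPI [MeasurableSpace Ω] [MeasurableSpace 𝒳] {μ : Measure Ω} {X : Fin n → Ω → 𝒳} {Y : Fin n → Ω → ℝ}
    {Xt : Fin N → Ω → 𝒳} {X₀ : Ω → 𝒳} {Y₀ : Ω → ℝ} {f : 𝒳 → ℝ} (hf : Measurable f)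
    (hiid : iIndepFun (fun i ω => (X i ω, Y i ω)) μ)
    (hident : ∀ i, IdentDistrib (fun ω => (X i ω, Y i ω)) (fun ω => (X₀ ω, Y₀ ω)) μ μ)
    (hiidt : iIndepFun Xt μ) (hidentt : ∀ i, IdentDistrib (Xt i) X₀ μ μ)
    (hind : IndepFun (fun ω => fun i : Fin n => (X i ω, Y i ω))
      (fun ω => fun i : Fin N => Xt i ω) μ)
    (hY2 : MemLp Y₀ 2 μ) (hfX2 : MemLp (fun ω => f (X₀ ω)) 2 μ) (lam : ℝ) :
    Var[powerTunedPPI X Y Xt f lam; μ]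
      = Var[fun ω => Y₀ ω - lam * f (X₀ ω); μ] / n + lam ^ 2 * Var[fun ω => f (X₀ ω); μ] / N := by
  set g : 𝒳 × ℝ → ℝ := fun p => p.2 - lam * f p.1
  have hg : Measurable g := by fun_prop
  have hg2 : MemLp (fun ω => g (X₀ ω, Y₀ ω)) 2 μ := hY2.sub (hfX2.const_mul lam)
  have hφ : Measurable fun v : Fin n → 𝒳 × ℝ => (n : ℝ)⁻¹ * ∑ i, g (v i) := by fun_prop
  have hψ : Measurable fun v : Fin N → 𝒳 => lam * ((N : ℝ)⁻¹ * ∑ i, f (v i)) := by fun_prop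
  have hlabeled := variance_mean_comp_of_iIndepFun hg hiid hident hg2
  have hunlabeled := variance_mean_comp_of_iIndepFun hf hiidt hidentt hfX2
  rw [Fintype.card_fin] at hlabeled hunlabeled
  rw [powerTunedPPI_eq, (hind.comp hφ hψ).variance_fun_add
    (memLp_const_mul_sum_comp_of_identDistrib hg hident hg2 _)
    ((memLp_const_mul_sum_comp_of_identDistrib hf hidentt hfX2 _).const_mul lam), hlabeled,
    variance_const_mul, hunlabeled]
  ring

end PowerTunedPPI

theorem power_tuned_ppi_variance_general
    {Ω : Type*} [MeasurableSpace Ω] (μ : Measure Ω) [IsProbabilityMeasure μ]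
    {𝒳 : Type*} [MeasurableSpace 𝒳]
    (n N : ℕ) (hn : 0 < n) (hN : 0 < N)
    (X : Fin n → Ω → 𝒳) (Y : Fin n → Ω → ℝ) (Xt : Fin N → Ω → 𝒳)
    (f : 𝒳 → ℝ) (hf : Measurable f)
    (hiid : iIndepFun (fun i ω => (X i ω, Y i ω)) μ)
    (hident : ∀ i, IdentDistrib (fun ω => (X i ω, Y i ω))
      (fun ω => (X ⟨0, hn⟩ ω, Y ⟨0, hn⟩ ω)) μ μ)
    (hiidt : iIndepFun Xt μ)
    (hidentt : ∀ i, IdentDistrib (Xt i) (X ⟨0, hn⟩) μ μ)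
    (hind : IndepFun (fun ω => fun i : Fin n => (X i ω, Y i ω))
      (fun ω => fun i : Fin N => Xt i ω) μ)
    (hY2 : MemLp (Y ⟨0, hn⟩) 2 μ) (hfX2 : MemLp (fun ω => f (X ⟨0, hn⟩ ω)) 2 μ)
    (σsq τsq γ : ℝ) (hτpos : 0 < τsq)
    (hσ : variance (Y ⟨0, hn⟩) μ = σsq)
    (hτ : variance (fun ω => f (X ⟨0, hn⟩ ω)) μ = τsq)
    (hγ : ∫ ω, (f (X ⟨0, hn⟩ ω) - ∫ ω', f (X ⟨0, hn⟩ ω') ∂μ)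
            * (Y ⟨0, hn⟩ ω - ∫ ω', Y ⟨0, hn⟩ ω' ∂μ) ∂μ = γ) :
    -- the power-tuned family and the optimal tuning parameter
    (∀ lam : ℝ,
      variance (fun ω => (n : ℝ)⁻¹ * ∑ i, Y i ω
          + lam * ((N : ℝ)⁻¹ * ∑ i, f (Xt i ω) - (n : ℝ)⁻¹ * ∑ i, f (X i ω))) μ
        = σsq / n + ((n + N : ℝ) / (n * N)) * lam ^ 2 * τsq - (2 / n) * lam * γ)
    ∧ (∀ lam : ℝ, lam ≠ ((N : ℝ) / (n + N)) * (γ / τsq) →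
        variance (fun ω => (n : ℝ)⁻¹ * ∑ i, Y i ω
            + (((N : ℝ) / (n + N)) * (γ / τsq))
              * ((N : ℝ)⁻¹ * ∑ i, f (Xt i ω) - (n : ℝ)⁻¹ * ∑ i, f (X i ω))) μ
          < variance (fun ω => (n : ℝ)⁻¹ * ∑ i, Y i ω
              + lam * ((N : ℝ)⁻¹ * ∑ i, f (Xt i ω) - (n : ℝ)⁻¹ * ∑ i, f (X i ω))) μ)
    ∧ variance (fun ω => (n : ℝ)⁻¹ * ∑ i, Y i ω
        + (((N : ℝ) / (n + N)) * (γ / τsq))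
          * ((N : ℝ)⁻¹ * ∑ i, f (Xt i ω) - (n : ℝ)⁻¹ * ∑ i, f (X i ω))) μ
      = σsq / n - ((N : ℝ) / (n * (n + N))) * (γ ^ 2 / τsq) := by
  have hcov : cov[fun ω => f (X ⟨0, hn⟩ ω), Y ⟨0, hn⟩; μ] = γ := hγ
  have hvar (lam : ℝ) : Var[powerTunedPPI X Y Xt f lam; μ]
      = σsq / n + ((n + N : ℝ) / (n * N)) * lam ^ 2 * τsq - (2 / n) * lam * γ := by
    rw [variance_powerTunedPPI hf hiid hident hiidt hidentt hind hY2 hfX2,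
      variance_sub_const_mul hY2 hfX2, hσ, hτ, hcov]
    field_simp
    ring
  have hvertex : (N : ℝ) / (n + N) * (γ / τsq) = (γ / n) / ((n + N : ℝ) / (n * N) * τsq) := by
    field_simp
  refine ⟨hvar, fun lam hne => ?_, ?_⟩
  · change Var[powerTunedPPI X Y Xt f _; μ] < Var[powerTunedPPI X Y Xt f lam; μ]
    rw [hvar, hvar, hvertex]
    rw [hvertex] at hne
    convert quadratic_lt_of_ne_vertex (c := σsq / n) (by positivity) hne using 1 <;> ring
  · refine (hvar _).trans ?_
    field_simp
    ring

/-- **Variance of the power-tuned PPI estimator and optimal power-tuning** (PPI++).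
With `σ² = Var(Y_1)`, `τ² = Var(f(X_1)) > 0`, `γ = Cov(f(X_1), Y_1)`, the estimator
`θ̂_λ = Ȳ + λ(Z̃^f − Z̄^f)` has `Var(θ̂_λ) = σ²/n + ((n+N)/(nN))λ²τ² − (2/n)λγ`;
this is uniquely minimized over `λ ∈ ℝ` at `λ* = (N/(n+N))·(γ/τ²)`, with minimum value
`σ²/n − (N/(n(n+N)))·(γ²/τ²)`. -/
theorem power_tuned_ppi_variance
    {Ω : Type*} [MeasurableSpace Ω] (μ : Measure Ω) [IsProbabilityMeasure μ]
    {𝒳 : Type*} [MeasurableSpace 𝒳]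
    (n N : ℕ) (hn : 0 < n) (hN : 0 < N)
    (X : Fin n → Ω → 𝒳) (Y : Fin n → Ω → ℝ) (Xt : Fin N → Ω → 𝒳)
    (f : 𝒳 → ℝ) (hf : Measurable f)
    (hXYmeas : ∀ i, Measurable (fun ω => (X i ω, Y i ω)))
    (hXtmeas : ∀ i, Measurable (Xt i))
    (hiid : iIndepFun (fun i ω => (X i ω, Y i ω)) μ)
    (hident : ∀ i, IdentDistrib (fun ω => (X i ω, Y i ω))
      (fun ω => (X ⟨0, hn⟩ ω, Y ⟨0, hn⟩ ω)) μ μ)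
    (hiidt : iIndepFun Xt μ)
    (hidentt : ∀ i, IdentDistrib (Xt i) (X ⟨0, hn⟩) μ μ)
    (hind : IndepFun (fun ω => fun i : Fin n => (X i ω, Y i ω))
      (fun ω => fun i : Fin N => Xt i ω) μ)
    (hY2 : MemLp (Y ⟨0, hn⟩) 2 μ) (hfX2 : MemLp (fun ω => f (X ⟨0, hn⟩ ω)) 2 μ)
    (σsq τsq γ : ℝ) (hτpos : 0 < τsq)
    (hσ : variance (Y ⟨0, hn⟩) μ = σsq)
    (hτ : variance (fun ω => f (X ⟨0, hn⟩ ω)) μ = τsq)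
    (hγ : ∫ ω, (f (X ⟨0, hn⟩ ω) - ∫ ω', f (X ⟨0, hn⟩ ω') ∂μ)
            * (Y ⟨0, hn⟩ ω - ∫ ω', Y ⟨0, hn⟩ ω' ∂μ) ∂μ = γ) :
    -- the power-tuned family and the optimal tuning parameter
    (∀ lam : ℝ,
      variance (fun ω => (n : ℝ)⁻¹ * ∑ i, Y i ω
          + lam * ((N : ℝ)⁻¹ * ∑ i, f (Xt i ω) - (n : ℝ)⁻¹ * ∑ i, f (X i ω))) μ
        = σsq / n + ((n + N : ℝ) / (n * N)) * lam ^ 2 * τsq - (2 / n) * lam * γ)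
    ∧ (∀ lam : ℝ, lam ≠ ((N : ℝ) / (n + N)) * (γ / τsq) →
        variance (fun ω => (n : ℝ)⁻¹ * ∑ i, Y i ω
            + (((N : ℝ) / (n + N)) * (γ / τsq))
              * ((N : ℝ)⁻¹ * ∑ i, f (Xt i ω) - (n : ℝ)⁻¹ * ∑ i, f (X i ω))) μ
          < variance (fun ω => (n : ℝ)⁻¹ * ∑ i, Y i ω
              + lam * ((N : ℝ)⁻¹ * ∑ i, f (Xt i ω) - (n : ℝ)⁻¹ * ∑ i, f (X i ω))) μ)
    ∧ variance (fun ω => (n : ℝ)⁻¹ * ∑ i, Y i ω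
        + (((N : ℝ) / (n + N)) * (γ / τsq))
          * ((N : ℝ)⁻¹ * ∑ i, f (Xt i ω) - (n : ℝ)⁻¹ * ∑ i, f (X i ω))) μ
      = σsq / n - ((N : ℝ) / (n * (n + N))) * (γ ^ 2 / τsq) :=
  power_tuned_ppi_variance_general μ n N hn hN X Y Xt f hf hiid hident hiidt hidentt hind hY2 hfX2
    σsq τsq γ hτpos hσ hτ hγ
end

section
/- In the compound setting, for every ω ≥ 0 and every realization of the latent variables η = (η_1,...,η_m), CURE is an unbiased estimator of the compound risk of the PAS shrinkage family: E_η[CURE(θ̂^PAS_ω)] = R_m(θ̂^PAS_ω, θ), where R_m(θ̂, θ) = E_η[(1/m)Σ_{j=1}^m (θ̂_j − θ_j)²]. -/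
/-!
For one problem write `T = θ̂^PT` and `Z = Z̃`. For any square-integrable `T`, `Z` with `E T = θ`,
expanding `w T + (1 - w) Z - θ = (T - θ) - (1 - w) (T - Z)` gives
`E (w T + (1 - w) Z - θ)² = (2w - 1) Var T + 2 (1 - w) Cov(T, Z) + (1 - w)² E (T - Z)²`,
so CURE is unbiased as soon as `Var T = σ̃²` and `Cov(T, Z) = γ̃`. Both follow from splitting
`T` as the labeled sample mean of the iid variables `Y - λ f(X)` plus `λ Z̃`: the two parts are
independent, and a mean of `k` iid variables has variance `Var / k`.
-/

open MeasureTheory ProbabilityTheory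

noncomputable section

namespace PASStmt4

variable {Ω : Type*} [MeasurableSpace Ω] {m : ℕ} {n N : Fin m → ℕ}

/-- Mean of the labeled outcomes of problem `j` (here `W j i = (f(X_{ij}), Y_{ij})`). -/
def Ybar (W : (j : Fin m) → Fin (n j) → Ω → ℝ × ℝ) (j : Fin m) (ω : Ω) : ℝ :=
  (n j : ℝ)⁻¹ * ∑ i, (W j i ω).2

/-- Mean of the labeled predictions of problem `j`. -/
def Zbar (W : (j : Fin m) → Fin (n j) → Ω → ℝ × ℝ) (j : Fin m) (ω : Ω) : ℝ :=
  (n j : ℝ)⁻¹ * ∑ i, (W j i ω).1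

/-- Mean of the unlabeled predictions of problem `j`. -/
def Ztil (Zt : (j : Fin m) → Fin (N j) → Ω → ℝ) (j : Fin m) (ω : Ω) : ℝ :=
  (N j : ℝ)⁻¹ * ∑ i, Zt j i ω

/-- The optimal power-tuning parameter `λ*_j = (N_j/(n_j+N_j))·γ_j/τ_j²`. -/
def lamStar (n N : Fin m → ℕ) (τsq γ : Fin m → ℝ) (j : Fin m) : ℝ :=
  ((N j : ℝ) / ((n j : ℝ) + (N j : ℝ))) * (γ j / τsq j)

/-- The power-tuned estimator `θ̂_j^PT = Ȳ_j + λ*_j (Z̃_j − Z̄_j)`. -/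
def PT (W : (j : Fin m) → Fin (n j) → Ω → ℝ × ℝ) (Zt : (j : Fin m) → Fin (N j) → Ω → ℝ)
    (τsq γ : Fin m → ℝ) (j : Fin m) (ω : Ω) : ℝ :=
  Ybar W j ω + lamStar n N τsq γ j * (Ztil Zt j ω - Zbar W j ω)

/-- The variance of the power-tuned estimator,
`σ̃_j² = σ_j²/n_j − N_j γ_j²/(n_j(n_j+N_j)τ_j²)`. -/
def sigTil (n N : Fin m → ℕ) (σsq τsq γ : Fin m → ℝ) (j : Fin m) : ℝ :=
  σsq j / (n j : ℝ) - (N j : ℝ) * (γ j) ^ 2 / ((n j : ℝ) * ((n j : ℝ) + (N j : ℝ)) * τsq j)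

/-- `γ̃_j = Cov(θ̂_j^PT, Z̃_j) = γ_j/(n_j+N_j)`. -/
def gamTil (n N : Fin m → ℕ) (γ : Fin m → ℝ) (j : Fin m) : ℝ :=
  γ j / ((n j : ℝ) + (N j : ℝ))

/-- Shrinkage weight `ω_j = ω/(ω + σ̃_j²)`. -/
def wgt (ωp : ℝ) (s : ℝ) : ℝ := ωp / (ωp + s)

section Moments

variable {μ : Measure Ω} [IsProbabilityMeasure μ] {X T Z : Ω → ℝ}

lemma integral_sq_eq_variance_add_sq (hX : MemLp X 2 μ) :
    ∫ ω, X ω ^ 2 ∂μ = Var[X; μ] + μ[X] ^ 2 := by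
  rw [variance_eq_sub hX, sub_add_cancel]
  rfl

lemma integral_cure_eq_integral_sq_error (hT : MemLp T 2 μ) (hZ : MemLp Z 2 μ) {θ : ℝ}
    (hθ : μ[T] = θ) (w : ℝ) :
    ∫ ω, ((2 * w - 1) * Var[T; μ] + 2 * (1 - w) * cov[T, Z; μ]
      + (1 - w) ^ 2 * (T ω - Z ω) ^ 2) ∂μ
      = ∫ ω, (w * T ω + (1 - w) * Z ω - θ) ^ 2 ∂μ := by
  have hTZ : MemLp (fun ω => T ω - Z ω) 2 μ := hT.sub hZ
  have hV : MemLp (fun ω => w * T ω + (1 - w) * Z ω) 2 μ :=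
    (hT.const_mul w).add (hZ.const_mul (1 - w))
  have hmeanV : μ[fun ω => w * T ω + (1 - w) * Z ω] = w * θ + (1 - w) * μ[Z] := by
    rw [integral_add (hT.const_mul w |>.integrable one_le_two)
      (hZ.const_mul (1 - w) |>.integrable one_le_two), integral_const_mul, integral_const_mul, hθ]
  have hvarV : Var[fun ω => w * T ω + (1 - w) * Z ω; μ]
      = w ^ 2 * Var[T; μ] + 2 * (w * (1 - w)) * cov[T, Z; μ] + (1 - w) ^ 2 * Var[Z; μ] := by
    rw [variance_fun_add (hT.const_mul w) (hZ.const_mul (1 - w)), variance_const_mul,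
      variance_const_mul, covariance_const_mul_left, covariance_const_mul_right]
    ring
  rw [integral_add (integrable_const _) (hTZ.integrable_sq.const_mul _), integral_const,
    integral_const_mul, integral_sq_eq_variance_add_sq hTZ, variance_fun_sub hT hZ,
    integral_sub (hT.integrable one_le_two) (hZ.integrable one_le_two), hθ,
    integral_sq_eq_variance_add_sq (X := fun ω => w * T ω + (1 - w) * Z ω - θ)
      (hV.sub (memLp_const θ)),
    variance_sub_const hV.aestronglyMeasurable, hvarV,
    integral_sub (hV.integrable one_le_two) (integrable_const θ), hmeanV, integral_const]
  simp only [probReal_univ, smul_eq_mul, one_mul]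
  ring

lemma integral_mean_cure_eq_integral_mean_sq_error {m : ℕ} {T Z : Fin m → Ω → ℝ}
    (hT : ∀ j, MemLp (T j) 2 μ) (hZ : ∀ j, MemLp (Z j) 2 μ) {θ : Fin m → ℝ}
    (hθ : ∀ j, μ[T j] = θ j) (w : Fin m → ℝ) :
    ∫ ω, (m : ℝ)⁻¹ * ∑ j, ((2 * w j - 1) * Var[T j; μ] + 2 * (1 - w j) * cov[T j, Z j; μ]
      + (1 - w j) ^ 2 * (T j ω - Z j ω) ^ 2) ∂μ
      = ∫ ω, (m : ℝ)⁻¹ * ∑ j, (w j * T j ω + (1 - w j) * Z j ω - θ j) ^ 2 ∂μ := by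
  have hcure : ∀ j, Integrable (fun ω => (2 * w j - 1) * Var[T j; μ]
      + 2 * (1 - w j) * cov[T j, Z j; μ] + (1 - w j) ^ 2 * (T j ω - Z j ω) ^ 2) μ :=
    fun j => (integrable_const _).add (((hT j).sub (hZ j)).integrable_sq.const_mul _)
  have herr : ∀ j, Integrable (fun ω => (w j * T j ω + (1 - w j) * Z j ω - θ j) ^ 2) μ :=
    fun j => ((((hT j).const_mul _).add ((hZ j).const_mul _)).sub (memLp_const _)).integrable_sq
  rw [integral_const_mul, integral_const_mul, integral_finsetSum _ fun j _ => hcure j,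
    integral_finsetSum _ fun j _ => herr j]
  exact congrArg _ (Finset.sum_congr rfl fun j _ =>
    integral_cure_eq_integral_sq_error (hT j) (hZ j) (hθ j) (w j))

end Moments

def sampleMean {Ω : Type*} {q : ℕ} (X : Fin q → Ω → ℝ) : Ω → ℝ :=
  fun ω => (q : ℝ)⁻¹ * ∑ i, X i ω

section SampleMean

variable {E : Type*} [MeasurableSpace E] {μ : Measure Ω} {q : ℕ} {V : Fin q → Ω → E}
  {Y : Ω → E} {f : E → ℝ}

lemma memLp_sampleMean (hV : ∀ i, IdentDistrib (V i) Y μ μ) (hf : Measurable f)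
    (hfY : MemLp (fun ω => f (Y ω)) 2 μ) :
    MemLp (sampleMean fun i ω => f (V i ω)) 2 μ := by
  have hVf : ∀ i, MemLp (fun ω => f (V i ω)) 2 μ :=
    fun i => ((hV i).comp hf).symm.memLp_snd hfY
  exact (memLp_finsetSum _ fun i _ => hVf i).const_mul _

lemma integral_sampleMean (hV : ∀ i, IdentDistrib (V i) Y μ μ) (hf : Measurable f)
    (hfY : Integrable (fun ω => f (Y ω)) μ) (hq : 0 < q) :
    μ[sampleMean fun i ω => f (V i ω)] = μ[fun ω => f (Y ω)] := by
  have hVf : ∀ i, Integrable (fun ω => f (V i ω)) μ :=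
    fun i => ((hV i).comp hf).symm.integrable_snd hfY
  have hmean : ∀ i, ∫ ω, f (V i ω) ∂μ = ∫ ω, f (Y ω) ∂μ := fun i => ((hV i).comp hf).integral_eq
  unfold sampleMean
  rw [integral_const_mul, integral_finsetSum _ fun i _ => hVf i]
  simp [hmean, hq.ne']

lemma variance_sampleMean (hind : iIndepFun V μ) (hV : ∀ i, IdentDistrib (V i) Y μ μ)
    (hf : Measurable f) (hfY : MemLp (fun ω => f (Y ω)) 2 μ) :
    Var[sampleMean fun i ω => f (V i ω); μ] = Var[fun ω => f (Y ω); μ] / q := by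
  have hVf : ∀ i, MemLp (fun ω => f (V i ω)) 2 μ :=
    fun i => ((hV i).comp hf).symm.memLp_snd hfY
  have hvar : ∀ i, Var[fun ω => f (V i ω); μ] = Var[fun ω => f (Y ω); μ] :=
    fun i => ((hV i).comp hf).variance_eq
  have hsum := IndepFun.variance_sum (X := fun i ω => f (V i ω)) (s := Finset.univ)
    (fun i _ => hVf i) (fun i _ j _ hij => (hind.indepFun hij).comp hf hf)
  rw [Finset.sum_fn] at hsum
  simp only [hvar, Finset.sum_const, Finset.card_univ, Fintype.card_fin, nsmul_eq_mul] at hsum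
  unfold sampleMean
  rw [variance_const_mul, hsum]
  rcases Nat.eq_zero_or_pos q with rfl | hq
  · simp
  · field_simp

lemma indepFun_sampleMean {F : Type*} [MeasurableSpace F] {p : ℕ} {C : Fin p → Ω → F}
    {g : F → ℝ} (h : IndepFun (fun ω i => V i ω) (fun ω k => C k ω) μ) (hf : Measurable f)
    (hg : Measurable g) :
    IndepFun (sampleMean fun i ω => f (V i ω)) (sampleMean fun k ω => g (C k ω)) μ :=
  h.comp (φ := fun v : Fin q → E => (q : ℝ)⁻¹ * ∑ i, f (v i))
    (ψ := fun x : Fin p → F => (p : ℝ)⁻¹ * ∑ k, g (x k))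
    (by fun_prop) (by fun_prop)

end SampleMean

def powerTuned {Ω : Type*} {p q : ℕ} (V : Fin p → Ω → ℝ × ℝ) (C : Fin q → Ω → ℝ) (c : ℝ) : Ω → ℝ :=
  fun ω => sampleMean (fun i ω => (V i ω).2) ω
    + c * (sampleMean C ω - sampleMean (fun i ω => (V i ω).1) ω)

section PowerTuned

variable {μ : Measure Ω} {p q : ℕ} {V : Fin p → Ω → ℝ × ℝ} {C : Fin q → Ω → ℝ} {i₀ : Fin p}

lemma powerTuned_eq_add {Ω : Type*} (V : Fin p → Ω → ℝ × ℝ) (C : Fin q → Ω → ℝ) (c : ℝ) :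
    powerTuned V C c = sampleMean (fun i ω => (V i ω).2 - c * (V i ω).1) + c • sampleMean C := by
  funext ω
  simp only [powerTuned, sampleMean, Pi.add_apply, Pi.smul_apply, smul_eq_mul,
    Finset.sum_sub_distrib, ← Finset.mul_sum]
  ring

lemma memLp_powerTuned (hVid : ∀ i, IdentDistrib (V i) (V i₀) μ μ)
    (hCid : ∀ k, IdentDistrib (C k) (fun ω => (V i₀ ω).1) μ μ)
    (hX : MemLp (fun ω => (V i₀ ω).1) 2 μ) (hY : MemLp (fun ω => (V i₀ ω).2) 2 μ) (c : ℝ) :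
    MemLp (powerTuned V C c) 2 μ := by
  have hYX : MemLp (fun ω => (V i₀ ω).2 - c * (V i₀ ω).1) 2 μ := hY.sub (hX.const_mul c)
  have hf : Measurable fun z : ℝ × ℝ => z.2 - c * z.1 := by fun_prop
  have hA : MemLp (sampleMean fun i ω => (V i ω).2 - c * (V i ω).1) 2 μ :=
    memLp_sampleMean hVid hf hYX
  have hZ : MemLp (sampleMean C) 2 μ := memLp_sampleMean (f := id) hCid measurable_id hX
  rw [powerTuned_eq_add]
  exact hA.add (hZ.const_smul c)

lemma integral_powerTuned [IsProbabilityMeasure μ] (hVid : ∀ i, IdentDistrib (V i) (V i₀) μ μ)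
    (hCid : ∀ k, IdentDistrib (C k) (fun ω => (V i₀ ω).1) μ μ)
    (hX : MemLp (fun ω => (V i₀ ω).1) 2 μ) (hY : MemLp (fun ω => (V i₀ ω).2) 2 μ)
    (hq : 0 < q) (c : ℝ) :
    μ[powerTuned V C c] = μ[fun ω => (V i₀ ω).2] := by
  have hX1 := hX.integrable one_le_two
  have hY1 := hY.integrable one_le_two
  have hYbar : μ[sampleMean fun i ω => (V i ω).2] = μ[fun ω => (V i₀ ω).2] :=
    integral_sampleMean hVid measurable_snd hY1 i₀.pos
  have hXbar : μ[sampleMean fun i ω => (V i ω).1] = μ[fun ω => (V i₀ ω).1] :=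
    integral_sampleMean hVid measurable_fst hX1 i₀.pos
  have hZbar : μ[sampleMean C] = μ[fun ω => (V i₀ ω).1] :=
    integral_sampleMean (f := id) hCid measurable_id hX1 hq
  have hYbar2 : MemLp (sampleMean fun i ω => (V i ω).2) 2 μ :=
    memLp_sampleMean hVid measurable_snd hY
  have hXbar2 : MemLp (sampleMean fun i ω => (V i ω).1) 2 μ :=
    memLp_sampleMean hVid measurable_fst hX
  have hZbar2 : MemLp (sampleMean C) 2 μ := memLp_sampleMean (f := id) hCid measurable_id hX
  have hdiff : Integrable (fun ω => c * (sampleMean C ω - sampleMean (fun i ω => (V i ω).1) ω)) μ :=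
    ((hZbar2.sub hXbar2).const_mul c).integrable one_le_two
  unfold powerTuned
  rw [integral_add (hYbar2.integrable one_le_two) hdiff, integral_const_mul,
    integral_sub (hZbar2.integrable one_le_two) (hXbar2.integrable one_le_two), hYbar, hXbar, hZbar]
  ring

lemma variance_powerTuned [IsProbabilityMeasure μ] (hV : iIndepFun V μ) (hC : iIndepFun C μ)
    (hVid : ∀ i, IdentDistrib (V i) (V i₀) μ μ)
    (hCid : ∀ k, IdentDistrib (C k) (fun ω => (V i₀ ω).1) μ μ)
    (hVC : IndepFun (fun ω i => V i ω) (fun ω k => C k ω) μ)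
    (hX : MemLp (fun ω => (V i₀ ω).1) 2 μ) (hY : MemLp (fun ω => (V i₀ ω).2) 2 μ) (c : ℝ) :
    Var[powerTuned V C c; μ]
      = (Var[fun ω => (V i₀ ω).2; μ] - 2 * c * cov[fun ω => (V i₀ ω).1, fun ω => (V i₀ ω).2; μ]
          + c ^ 2 * Var[fun ω => (V i₀ ω).1; μ]) / p
        + c ^ 2 * Var[fun ω => (V i₀ ω).1; μ] / q := by
  have hf : Measurable fun z : ℝ × ℝ => z.2 - c * z.1 := by fun_prop
  have hYX : MemLp (fun ω => (V i₀ ω).2 - c * (V i₀ ω).1) 2 μ := hY.sub (hX.const_mul c)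
  have hA : MemLp (sampleMean fun i ω => (V i ω).2 - c * (V i ω).1) 2 μ :=
    memLp_sampleMean hVid hf hYX
  have hZ : MemLp (sampleMean C) 2 μ := memLp_sampleMean (f := id) hCid measurable_id hX
  have hAZ : IndepFun (sampleMean fun i ω => (V i ω).2 - c * (V i ω).1) (c • sampleMean C) μ :=
    (indepFun_sampleMean (g := id) hVC hf measurable_id).comp measurable_id
      (measurable_const_smul c)
  have hvarZ : Var[sampleMean C; μ] = Var[fun ω => (V i₀ ω).1; μ] / q :=
    variance_sampleMean (f := id) hC hCid measurable_id hX
  rw [powerTuned_eq_add, hAZ.variance_add hA (hZ.const_smul c), variance_smul,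
    variance_sampleMean hV hVid hf hYX, hvarZ,
    variance_fun_sub hY (hX.const_mul c), variance_const_mul, covariance_const_mul_right,
    covariance_comm]
  ring

lemma covariance_powerTuned_sampleMean [IsProbabilityMeasure μ] (hC : iIndepFun C μ)
    (hVid : ∀ i, IdentDistrib (V i) (V i₀) μ μ)
    (hCid : ∀ k, IdentDistrib (C k) (fun ω => (V i₀ ω).1) μ μ)
    (hVC : IndepFun (fun ω i => V i ω) (fun ω k => C k ω) μ)
    (hX : MemLp (fun ω => (V i₀ ω).1) 2 μ) (hY : MemLp (fun ω => (V i₀ ω).2) 2 μ) (c : ℝ) :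
    cov[powerTuned V C c, sampleMean C; μ] = c * Var[fun ω => (V i₀ ω).1; μ] / q := by
  have hf : Measurable fun z : ℝ × ℝ => z.2 - c * z.1 := by fun_prop
  have hA : MemLp (sampleMean fun i ω => (V i ω).2 - c * (V i ω).1) 2 μ :=
    memLp_sampleMean hVid hf (hY.sub (hX.const_mul c))
  have hZ : MemLp (sampleMean C) 2 μ := memLp_sampleMean (f := id) hCid measurable_id hX
  have hAZ : IndepFun (sampleMean fun i ω => (V i ω).2 - c * (V i ω).1) (sampleMean C) μ :=
    indepFun_sampleMean (g := id) hVC hf measurable_id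
  have hvarZ : Var[sampleMean C; μ] = Var[fun ω => (V i₀ ω).1; μ] / q :=
    variance_sampleMean (f := id) hC hCid measurable_id hX
  rw [powerTuned_eq_add, covariance_add_left hA (hZ.const_smul c) hZ,
    hAZ.covariance_eq_zero hA hZ, covariance_smul_left, covariance_self hZ.aemeasurable, hvarZ]
  ring

end PowerTuned

lemma sigTil_eq {σsq τsq γ : Fin m → ℝ} (j : Fin m) (hn : 0 < n j) (hN : 0 < N j)
    (hτ : τsq j ≠ 0) :
    sigTil n N σsq τsq γ j
      = (σsq j - 2 * lamStar n N τsq γ j * γ j + lamStar n N τsq γ j ^ 2 * τsq j) / n j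
        + lamStar n N τsq γ j ^ 2 * τsq j / N j := by
  have hn' : (n j : ℝ) ≠ 0 := by positivity
  have hN' : (N j : ℝ) ≠ 0 := by positivity
  have hnN : (n j : ℝ) + N j ≠ 0 := by positivity
  simp only [sigTil, lamStar]
  field_simp
  ring

lemma gamTil_eq {τsq γ : Fin m → ℝ} (j : Fin m) (hN : 0 < N j) (hτ : τsq j ≠ 0) :
    gamTil n N γ j = lamStar n N τsq γ j * τsq j / N j := by
  have hN' : (N j : ℝ) ≠ 0 := by positivity
  have hnN : (n j : ℝ) + N j ≠ 0 := by positivity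
  simp only [gamTil, lamStar]
  field_simp

theorem cure_unbiased_compound_general
    (μ : Measure Ω) [IsProbabilityMeasure μ]
    (hn : ∀ j, 0 < n j) (hN : ∀ j, 0 < N j)
    (W : (j : Fin m) → Fin (n j) → Ω → ℝ × ℝ) (Zt : (j : Fin m) → Fin (N j) → Ω → ℝ)
    (θ μf τsq σsq γ : Fin m → ℝ)
    -- within each problem, the labeled pairs are iid, the unlabeled predictions are iid
    -- copies of the labeled predictions, and labeled and unlabeled parts are independent
    (hWiid : ∀ j, iIndepFun (W j) μ)
    (hZtiid : ∀ j, iIndepFun (Zt j) μ)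
    (hWident : ∀ j i, IdentDistrib (W j i) (W j ⟨0, hn j⟩) μ μ)
    (hZtident : ∀ j i, IdentDistrib (Zt j i) (fun ω => (W j ⟨0, hn j⟩ ω).1) μ μ)
    (hblock : ∀ j, IndepFun (fun ω => fun i => W j i ω) (fun ω => fun i => Zt j i ω) μ)
    -- first and second moments, conditional on the latent variables
    (hmom : ∀ j,
      (∫ ω, (W j ⟨0, hn j⟩ ω).2 ∂μ = θ j)
      ∧ (∫ ω, (W j ⟨0, hn j⟩ ω).1 ∂μ = μf j)
      ∧ variance (fun ω => (W j ⟨0, hn j⟩ ω).1) μ = τsq j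
      ∧ variance (fun ω => (W j ⟨0, hn j⟩ ω).2) μ = σsq j
      ∧ ∫ ω, ((W j ⟨0, hn j⟩ ω).1 - μf j) * ((W j ⟨0, hn j⟩ ω).2 - θ j) ∂μ = γ j)
    (hL2 : ∀ j, MemLp (fun ω => (W j ⟨0, hn j⟩ ω).1) 2 μ
      ∧ MemLp (fun ω => (W j ⟨0, hn j⟩ ω).2) 2 μ)
    (hτpos : ∀ j, 0 < τsq j) :
    ∀ ωp : ℝ, 0 ≤ ωp →
      ∫ ω, ((m : ℝ)⁻¹ * ∑ j,
          ((2 * wgt ωp (sigTil n N σsq τsq γ j) - 1) * sigTil n N σsq τsq γ j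
            + 2 * (1 - wgt ωp (sigTil n N σsq τsq γ j)) * gamTil n N γ j
            + (1 - wgt ωp (sigTil n N σsq τsq γ j)) ^ 2
              * (PT W Zt τsq γ j ω - Ztil Zt j ω) ^ 2)) ∂μ
      = ∫ ω, ((m : ℝ)⁻¹ * ∑ j,
          (wgt ωp (sigTil n N σsq τsq γ j) * PT W Zt τsq γ j ω
            + (1 - wgt ωp (sigTil n N σsq τsq γ j)) * Ztil Zt j ω - θ j) ^ 2) ∂μ := by
  intro ωp _
  have hT : ∀ j, MemLp (PT W Zt τsq γ j) 2 μ :=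
    fun j => memLp_powerTuned (hWident j) (hZtident j) (hL2 j).1 (hL2 j).2 _
  have hZ : ∀ j, MemLp (Ztil Zt j) 2 μ :=
    fun j => memLp_sampleMean (f := id) (hZtident j) measurable_id (hL2 j).1
  have hmean : ∀ j, μ[PT W Zt τsq γ j] = θ j := fun j =>
    (integral_powerTuned (hWident j) (hZtident j) (hL2 j).1 (hL2 j).2 (hN j) _).trans (hmom j).1
  have hvar : ∀ j, Var[PT W Zt τsq γ j; μ] = sigTil n N σsq τsq γ j := by
    intro j
    obtain ⟨hθ, hμf, hτ, hσ, hγ⟩ := hmom j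
    have hcov : cov[fun ω => (W j ⟨0, hn j⟩ ω).1, fun ω => (W j ⟨0, hn j⟩ ω).2; μ] = γ j := by
      rw [covariance, hμf, hθ, hγ]
    rw [sigTil_eq j (hn j) (hN j) (hτpos j).ne', ← hτ, ← hσ, ← hcov]
    exact variance_powerTuned (hWiid j) (hZtiid j) (hWident j) (hZtident j) (hblock j)
      (hL2 j).1 (hL2 j).2 _
  have hcov : ∀ j, cov[PT W Zt τsq γ j, Ztil Zt j; μ] = gamTil n N γ j := by
    intro j
    rw [gamTil_eq j (hN j) (hτpos j).ne', ← (hmom j).2.2.1]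
    exact covariance_powerTuned_sampleMean (hZtiid j) (hWident j) (hZtident j) (hblock j)
      (hL2 j).1 (hL2 j).2 _
  simp_rw [← hvar, ← hcov]
  exact integral_mean_cure_eq_integral_mean_sq_error hT hZ hmean _

/-- **CURE is an unbiased estimator of the compound risk of the PAS family**
(Theorem `gsure-PAS`).  In the compound setting, for every `ω ≥ 0` and every realization
of the latent variables (here: every fixed collection of per-problem moments
`θ_j, μ_j, τ_j², σ_j², γ_j` and conditional data-generating mechanism),
`E[CURE(θ̂^PAS_ω)] = R_m(θ̂^PAS_ω, θ)`. -/
theorem cure_unbiased_compound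
    (μ : Measure Ω) [IsProbabilityMeasure μ]
    (hn : ∀ j, 0 < n j) (hN : ∀ j, 0 < N j)
    (W : (j : Fin m) → Fin (n j) → Ω → ℝ × ℝ) (Zt : (j : Fin m) → Fin (N j) → Ω → ℝ)
    (θ μf τsq σsq γ : Fin m → ℝ)
    (hWmeas : ∀ j i, Measurable (W j i)) (hZtmeas : ∀ j i, Measurable (Zt j i))
    -- within each problem, the labeled pairs are iid, the unlabeled predictions are iid
    -- copies of the labeled predictions, and labeled and unlabeled parts are independent
    (hWiid : ∀ j, iIndepFun (W j) μ)
    (hZtiid : ∀ j, iIndepFun (Zt j) μ)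
    (hWident : ∀ j i, IdentDistrib (W j i) (W j ⟨0, hn j⟩) μ μ)
    (hZtident : ∀ j i, IdentDistrib (Zt j i) (fun ω => (W j ⟨0, hn j⟩ ω).1) μ μ)
    (hblock : ∀ j, IndepFun (fun ω => fun i => W j i ω) (fun ω => fun i => Zt j i ω) μ)
    -- distinct problems are independent
    (hacross : iIndepFun
      (fun j ω => ((fun i => W j i ω), (fun i => Zt j i ω))) μ)
    -- first and second moments, conditional on the latent variables
    (hmom : ∀ j,
      (∫ ω, (W j ⟨0, hn j⟩ ω).2 ∂μ = θ j)
      ∧ (∫ ω, (W j ⟨0, hn j⟩ ω).1 ∂μ = μf j)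
      ∧ variance (fun ω => (W j ⟨0, hn j⟩ ω).1) μ = τsq j
      ∧ variance (fun ω => (W j ⟨0, hn j⟩ ω).2) μ = σsq j
      ∧ ∫ ω, ((W j ⟨0, hn j⟩ ω).1 - μf j) * ((W j ⟨0, hn j⟩ ω).2 - θ j) ∂μ = γ j)
    (hL2 : ∀ j, MemLp (fun ω => (W j ⟨0, hn j⟩ ω).1) 2 μ
      ∧ MemLp (fun ω => (W j ⟨0, hn j⟩ ω).2) 2 μ)
    (hτpos : ∀ j, 0 < τsq j) :
    ∀ ωp : ℝ, 0 ≤ ωp →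
      ∫ ω, ((m : ℝ)⁻¹ * ∑ j,
          ((2 * wgt ωp (sigTil n N σsq τsq γ j) - 1) * sigTil n N σsq τsq γ j
            + 2 * (1 - wgt ωp (sigTil n N σsq τsq γ j)) * gamTil n N γ j
            + (1 - wgt ωp (sigTil n N σsq τsq γ j)) ^ 2
              * (PT W Zt τsq γ j ω - Ztil Zt j ω) ^ 2)) ∂μ
      = ∫ ω, ((m : ℝ)⁻¹ * ∑ j,
          (wgt ωp (sigTil n N σsq τsq γ j) * PT W Zt τsq γ j ω
            + (1 - wgt ωp (sigTil n N σsq τsq γ j)) * Ztil Zt j ω - θ j) ^ 2) ∂μ :=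
  cure_unbiased_compound_general μ hn hN W Zt θ μf τsq σsq γ hWiid hZtiid hWident hZtident hblock
    hmom hL2 hτpos

end PASStmt4
end
end
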